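/- arXiv:2109.13347 — 5 statements merged into one kernel-verified Lean document; each statement's English description precedes it below -/
import Mathlib

section
/- Let M be a q × k row-stochastic matrix with k ≤ q and M̂ its extension defined by m̂_{i,j} = (k/q)·m_{i,j} for j ≤ k and m̂_{i,j} = 1/q otherwise. Let h(M) = −Σ_{i,j} m_{i,j} log m_{i,j} (with 0·log 0 = 0). Then log k − (1/q)·h(M) = (q/k)·(log q − (1/q)·h(M̂)). -/
open Finset

lemma aux_clog (c m : ℝ) (hc : 0 < c) (hm : 0 ≤ m) :
    (c * m) * Real.log (c * m) = c * Real.log c * m + c * (m * Real.log m) := by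
  rcases eq_or_lt_of_le hm with h | h
  · simp [← h]
  · rw [Real.log_mul hc.ne' h.ne']
    ring

/-- With M̂ the extension of a q × k row-stochastic matrix M and
h(M) = −Σ m log m (with 0 log 0 = 0), one has
log k − (1/q)h(M) = (q/k)(log q − (1/q)h(M̂)). -/
theorem stmt2 (q k : ℕ) (hq : 0 < q) (hk : 0 < k) (hkq : k ≤ q)
    (M : Matrix (Fin q) (Fin k) ℝ)
    (hnn : ∀ i j, 0 ≤ M i j) (hrow : ∀ i, ∑ j, M i j = 1)
    (Mhat : Matrix (Fin q) (Fin q) ℝ)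
    (hMhat : ∀ i j, Mhat i j =
      if h : (j : ℕ) < k then ((k : ℝ) / q) * M i ⟨j, h⟩ else 1 / q) :
    Real.log k - (1 / q) * (-∑ i, ∑ j, M i j * Real.log (M i j))
      = ((q : ℝ) / k) *
        (Real.log q - (1 / q) * (-∑ i, ∑ j, Mhat i j * Real.log (Mhat i j))) := by
  have hq0 : (0:ℝ) < (q:ℝ) := by exact_mod_cast hq
  have hk0 : (0:ℝ) < (k:ℝ) := by exact_mod_cast hk
  have hc : (0:ℝ) < (k:ℝ)/(q:ℝ) := div_pos hk0 hq0
  set c : ℝ := (k:ℝ)/(q:ℝ) with hcdef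
  have hrowsum : ∀ i, ∑ j, Mhat i j * Real.log (Mhat i j)
      = c * Real.log c + c * (∑ j, M i j * Real.log (M i j))
        + ((q:ℝ) - k) * ((1/q) * Real.log (1/q)) := by
    intro i
    have h1 : ∑ j : Fin q, Mhat i j * Real.log (Mhat i j)
        = ∑ n ∈ Finset.range q, (if h : n < k then
            (c * M i ⟨n, h⟩) * Real.log (c * M i ⟨n, h⟩)
          else (1/q) * Real.log (1/(q:ℝ))) := by
      rw [← Fin.sum_univ_eq_sum_range
        (fun n => (if h : n < k then (c * M i ⟨n, h⟩) * Real.log (c * M i ⟨n, h⟩)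
          else (1/q) * Real.log (1/(q:ℝ)))) q]
      refine Finset.sum_congr rfl fun j _ => ?_
      rw [hMhat i j]
      by_cases h : (j:ℕ) < k <;> simp [h]
    rw [h1, ← Finset.sum_range_add_sum_Ico _ hkq]
    have h2 : ∑ n ∈ Finset.range k, (if h : n < k then
            (c * M i ⟨n, h⟩) * Real.log (c * M i ⟨n, h⟩)
          else (1/q) * Real.log (1/(q:ℝ)))
        = ∑ j : Fin k, (c * M i j) * Real.log (c * M i j) := by
      rw [← Fin.sum_univ_eq_sum_range
        (fun n => (if h : n < k then (c * M i ⟨n, h⟩) * Real.log (c * M i ⟨n, h⟩)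
          else (1/q) * Real.log (1/(q:ℝ)))) k]
      refine Finset.sum_congr rfl fun j _ => ?_
      simp [j.isLt]
    have h3 : ∑ n ∈ Finset.Ico k q, (if h : n < k then
            (c * M i ⟨n, h⟩) * Real.log (c * M i ⟨n, h⟩)
          else (1/q) * Real.log (1/(q:ℝ)))
        = ((q:ℝ) - k) * ((1/q) * Real.log (1/q)) := by
      rw [Finset.sum_congr rfl (fun n hn => ?_), Finset.sum_const, Nat.card_Ico,
        nsmul_eq_mul, Nat.cast_sub hkq]
      rw [dif_neg (by exact Nat.not_lt.mpr (Finset.mem_Ico.mp hn).1)]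
    rw [h2, h3]
    congr 1
    have h4 : ∀ j : Fin k, (c * M i j) * Real.log (c * M i j)
        = c * Real.log c * M i j + c * (M i j * Real.log (M i j)) :=
      fun j => aux_clog c (M i j) hc (hnn i j)
    rw [Finset.sum_congr rfl (fun j _ => h4 j), Finset.sum_add_distrib,
      ← Finset.mul_sum, hrow i, ← Finset.mul_sum]
    ring
  have htot : ∑ i, ∑ j, Mhat i j * Real.log (Mhat i j)
      = (q:ℝ) * (c * Real.log c + ((q:ℝ) - k) * ((1/q) * Real.log (1/q)))
        + c * (∑ i, ∑ j, M i j * Real.log (M i j)) := by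
    rw [Finset.sum_congr rfl (fun i _ => hrowsum i)]
    rw [Finset.sum_add_distrib, Finset.sum_add_distrib, Finset.sum_const,
      Finset.sum_const, ← Finset.mul_sum]
    simp [Finset.card_univ]
    ring
  rw [htot]
  have hlogc : Real.log c = Real.log k - Real.log q := Real.log_div hk0.ne' hq0.ne'
  have hlogq : Real.log (1/(q:ℝ)) = -Real.log q := by
    rw [one_div, Real.log_inv]
  rw [hlogc, hlogq, hcdef]
  field_simp
  ring
end

section
/- Let q ≥ 3, let c > 0, and suppose the following inequality holds for all q × q row-stochastic matrices N: c·log(1 + (ρ(N)−1)/(q−1)²) ≤ log q − (1/q)h(N). Then for every k with 3 ≤ k ≤ q and every q × k row-stochastic matrix M, we have (k−1)/(q−1)·c·log(1 + ((k/q)ρ(M) − 1)/((q−1)(k−1))) ≤ log k − (1/q)h(M). -/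
/-!
Pad `M` to the `q × q` row-stochastic matrix `N` that scales `M` by `k / q` and appends `q - k`
uniform columns `1 / q`. Then `log q - h(N)/q = (k/q)(log k - h(M)/q)`, while
`(ρ(N) - 1)/(q - 1)² = t y` with `t = k(k-1)/(q(q-1)) ≤ 1` and `y` the argument of the logarithm
in the rectangular inequality. The square inequality for `N` together with the concavity bound
`t log(1 + y) ≤ log(1 + t y)`, valid for every `y > -1`, gives the claim after multiplying by `q / k`.
-/

open Finset Real

theorem Real.mul_log_one_add_le_log_one_add_mul {t y : ℝ} (ht0 : 0 ≤ t) (ht1 : t ≤ 1)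
    (hy : -1 < y) : t * log (1 + y) ≤ log (1 + t * y) := by
  have hpos : 0 < 1 + y := by linarith
  rw [← log_rpow hpos]
  exact log_le_log (by positivity) (rpow_one_add_le_one_add_mul_self hy.le ht0 ht1)

theorem Real.mul_mul_log_mul (a x : ℝ) : a * x * log (a * x) = a * (x * log x) + a * log a * x := by
  have h := negMulLog_mul a x
  simp only [negMulLog] at h
  linarith

section padColumns

variable {ι : Type*} {q k : ℕ}

noncomputable def padColumns (q : ℕ) (M : Matrix ι (Fin k) ℝ) : Matrix ι (Fin q) ℝ :=
  fun i j => if h : (j : ℕ) < k then (k / q : ℝ) * M i ⟨j, h⟩ else 1 / q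

theorem sum_comp_padColumns (hkq : k ≤ q) (f : ℝ → ℝ) (M : Matrix ι (Fin k) ℝ) (i : ι) :
    ∑ j, f (padColumns q M i j) = ∑ a, f ((k / q : ℝ) * M i a) + ((q : ℝ) - k) * f (1 / q) := by
  obtain ⟨m, rfl⟩ := Nat.exists_eq_add_of_le hkq
  simp [padColumns, Fin.sum_univ_add]

theorem padColumns_nonneg {M : Matrix ι (Fin k) ℝ} (hM : ∀ i j, 0 ≤ M i j) (i : ι) (j : Fin q) :
    0 ≤ padColumns q M i j := by
  unfold padColumns
  split_ifs
  · exact mul_nonneg (by positivity) (hM _ _)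
  · positivity

theorem sum_padColumns_eq_one (hkq : k ≤ q) {M : Matrix ι (Fin k) ℝ}
    (hrow : ∀ i, ∑ j, M i j = 1) (i : ι) : ∑ j, padColumns q M i j = 1 := by
  have hk : k ≠ 0 := by rintro rfl; simpa using hrow i
  have hq : (q : ℝ) ≠ 0 := by norm_cast; omega
  have h := sum_comp_padColumns hkq id M i
  simp only [id] at h
  rw [h, ← mul_sum, hrow i]
  field_simp
  ring

theorem sum_sq_padColumns [Fintype ι] (hkq : k ≤ q) (M : Matrix ι (Fin k) ℝ) :
    ∑ i, ∑ j, padColumns q M i j ^ 2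
      = (k / q : ℝ) ^ 2 * ∑ i, ∑ j, M i j ^ 2
        + Fintype.card ι * (((q : ℝ) - k) * (1 / q) ^ 2) := by
  simp only [sum_comp_padColumns hkq (· ^ 2), mul_pow, ← mul_sum, sum_add_distrib, sum_const,
    card_univ, nsmul_eq_mul]
  ring

theorem sum_mul_log_padColumns [Fintype ι] (hkq : k ≤ q) {M : Matrix ι (Fin k) ℝ}
    (hrow : ∀ i, ∑ j, M i j = 1) :
    ∑ i, ∑ j, padColumns q M i j * log (padColumns q M i j)
      = (k / q : ℝ) * ∑ i, ∑ j, M i j * log (M i j)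
        + Fintype.card ι * ((k / q : ℝ) * log (k / q)
          + ((q : ℝ) - k) * (1 / q * log (1 / q))) := by
  simp only [sum_comp_padColumns hkq (fun x => x * log x), Real.mul_mul_log_mul, sum_add_distrib,
    ← mul_sum, hrow, mul_one, sum_const, card_univ, nsmul_eq_mul]
  ring

theorem sum_sq_padColumns_sub_one_div (hk : 2 ≤ k) (hkq : k ≤ q) (M : Matrix (Fin q) (Fin k) ℝ) :
    (∑ i, ∑ j, padColumns q M i j ^ 2 - 1) / ((q : ℝ) - 1) ^ 2
      = (k * (k - 1)) / (q * (q - 1)) * (((k / q : ℝ) * ∑ i, ∑ j, M i j ^ 2 - 1)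
        / (((q : ℝ) - 1) * ((k : ℝ) - 1))) := by
  have hK : (2 : ℝ) ≤ k := by exact_mod_cast hk
  have hQ : (k : ℝ) ≤ q := by exact_mod_cast hkq
  have hq1 : (q : ℝ) - 1 ≠ 0 := by linarith
  have hk1 : (k : ℝ) - 1 ≠ 0 := by linarith
  have hq0 : (q : ℝ) ≠ 0 := by linarith
  rw [sum_sq_padColumns hkq, Fintype.card_fin]
  field_simp
  ring

theorem log_sub_entropy_padColumns (hk : 0 < k) (hkq : k ≤ q) {M : Matrix (Fin q) (Fin k) ℝ}
    (hrow : ∀ i, ∑ j, M i j = 1) :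
    log q - 1 / q * -∑ i, ∑ j, padColumns q M i j * log (padColumns q M i j)
      = (k / q : ℝ) * (log k - 1 / q * -∑ i, ∑ j, M i j * log (M i j)) := by
  have hk0 : (k : ℝ) ≠ 0 := by positivity
  have hq0 : (q : ℝ) ≠ 0 := by norm_cast; omega
  rw [sum_mul_log_padColumns hkq hrow, Fintype.card_fin, log_div hk0 hq0, one_div, log_inv]
  field_simp
  ring

end padColumns

theorem stmt4_general (q k : ℕ) (hk : 3 ≤ k) (hkq : k ≤ q) (c : ℝ) (hc : 0 < c)
    (hAN : ∀ N : Matrix (Fin q) (Fin q) ℝ,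
      (∀ i j, 0 ≤ N i j) → (∀ i, ∑ j, N i j = 1) →
      c * Real.log (1 + ((∑ i, ∑ j, (N i j) ^ 2) - 1) / ((q : ℝ) - 1) ^ 2)
        ≤ Real.log q - (1 / q) * (-∑ i, ∑ j, N i j * Real.log (N i j)))
    (M : Matrix (Fin q) (Fin k) ℝ)
    (hnn : ∀ i j, 0 ≤ M i j) (hrow : ∀ i, ∑ j, M i j = 1) :
    (((k : ℝ) - 1) / ((q : ℝ) - 1)) * c *
      Real.log (1 + (((k : ℝ) / q) * (∑ i, ∑ j, (M i j) ^ 2) - 1)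
        / (((q : ℝ) - 1) * ((k : ℝ) - 1)))
      ≤ Real.log k - (1 / q) * (-∑ i, ∑ j, M i j * Real.log (M i j)) := by
  have hK : (3 : ℝ) ≤ k := by exact_mod_cast hk
  have hKQ : (k : ℝ) ≤ q := by exact_mod_cast hkq
  have hQ : (3 : ℝ) ≤ q := hK.trans hKQ
  have hN := hAN (padColumns q M) (padColumns_nonneg hnn) (sum_padColumns_eq_one hkq hrow)
  rw [sum_sq_padColumns_sub_one_div (by omega) hkq,
    log_sub_entropy_padColumns (by omega) hkq hrow] at hN
  set y := ((k / q : ℝ) * ∑ i, ∑ j, M i j ^ 2 - 1) / (((q : ℝ) - 1) * ((k : ℝ) - 1)) with hy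
  set t := ((k : ℝ) * (k - 1)) / (q * (q - 1)) with ht
  have hy1 : -1 < y := by
    have hρ : 0 ≤ (k / q : ℝ) * ∑ i, ∑ j, M i j ^ 2 := by positivity
    rw [hy, lt_div_iff₀ (by nlinarith)]
    nlinarith
  have ht0 : 0 ≤ t := by
    rw [ht]
    apply div_nonneg <;> nlinarith
  have ht1 : t ≤ 1 := by
    rw [ht, div_le_one (by nlinarith)]
    nlinarith
  calc ((k : ℝ) - 1) / ((q : ℝ) - 1) * c * log (1 + y)
      = q / k * (c * (t * log (1 + y))) := by
        rw [ht]
        field_simp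
    _ ≤ q / k * (c * log (1 + t * y)) := by
        gcongr
        exact Real.mul_log_one_add_le_log_one_add_mul ht0 ht1 hy1
    _ ≤ q / k * ((k / q : ℝ) * (log k - 1 / q * -∑ i, ∑ j, M i j * log (M i j))) := by gcongr
    _ = log k - 1 / q * -∑ i, ∑ j, M i j * log (M i j) := by
        field_simp

/-- If the Achlioptas–Naor inequality holds at constant c for all q × q
row-stochastic matrices, then its rectangular extension holds for all q × k
row-stochastic matrices (3 ≤ k ≤ q) at the rescaled constant (k−1)c/(q−1). -/
theorem stmt4 (q k : ℕ) (hq : 3 ≤ q) (hk : 3 ≤ k) (hkq : k ≤ q) (c : ℝ) (hc : 0 < c)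
    (hAN : ∀ N : Matrix (Fin q) (Fin q) ℝ,
      (∀ i j, 0 ≤ N i j) → (∀ i, ∑ j, N i j = 1) →
      c * Real.log (1 + ((∑ i, ∑ j, (N i j) ^ 2) - 1) / ((q : ℝ) - 1) ^ 2)
        ≤ Real.log q - (1 / q) * (-∑ i, ∑ j, N i j * Real.log (N i j)))
    (M : Matrix (Fin q) (Fin k) ℝ)
    (hnn : ∀ i j, 0 ≤ M i j) (hrow : ∀ i, ∑ j, M i j = 1) :
    (((k : ℝ) - 1) / ((q : ℝ) - 1)) * c *
      Real.log (1 + (((k : ℝ) / q) * (∑ i, ∑ j, (M i j) ^ 2) - 1)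
        / (((q : ℝ) - 1) * ((k : ℝ) - 1)))
      ≤ Real.log k - (1 / q) * (-∑ i, ∑ j, M i j * Real.log (M i j)) :=
  stmt4_general q k hk hkq c hc hAN M hnn hrow
end

section
/- Let d, k ≥ 1 be integers, let V be a set of d+1 vertices, and for each v ∈ V let a_v ∈ ℝ^k be a vector with nonnegative entries summing to 1. Then (1/2)·Σ_{v ≠ v'} log(1 − ⟨a_v, a_{v'}⟩) ≤ (d+1)d/2 · log(1 − (d+1)/(d k) + (1/(d(d+1)))·Σ_{v ∈ V} ⟨a_v, a_v⟩), where the sum on the left ranges over ordered pairs of distinct v, v' ∈ V and the left-hand side is interpreted as −∞ if some ⟨a_v, a_{v'}⟩ = 1. -/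
open Finset

/-- For probability vectors a_v ∈ ℝ^k indexed by d+1 vertices,
(1/2)Σ_{v≠v'} log(1 − ⟨a_v,a_{v'}⟩)
  ≤ ((d+1)d/2) log(1 − (d+1)/(dk) + (1/(d(d+1)))Σ_v ⟨a_v,a_v⟩),
the left side being −∞ (so the inequality trivially true) if some ⟨a_v,a_{v'}⟩ = 1. -/
theorem stmt5 (d k : ℕ) (hd : 1 ≤ d) (hk : 1 ≤ k)
    (a : Fin (d + 1) → Fin k → ℝ)
    (hnn : ∀ v i, 0 ≤ a v i) (hsum : ∀ v, ∑ i, a v i = 1) :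
    (∃ v v' : Fin (d + 1), v ≠ v' ∧ ∑ t, a v t * a v' t = 1) ∨
    (1 / 2 : ℝ) * ∑ p ∈ Finset.univ.offDiag,
        Real.log (1 - ∑ t, a p.1 t * a p.2 t)
      ≤ ((d : ℝ) + 1) * d / 2 *
        Real.log (1 - ((d : ℝ) + 1) / ((d : ℝ) * k)
          + (1 / ((d : ℝ) * ((d : ℝ) + 1))) * ∑ v, ∑ t, (a v t) ^ 2) := by
  by_cases hex : ∃ v v' : Fin (d + 1), v ≠ v' ∧ ∑ t, a v t * a v' t = 1
  · exact Or.inl hex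
  right
  push_neg at hex
  have hd1 : (1:ℝ) ≤ (d:ℝ) := by exact_mod_cast hd
  have hk1 : (1:ℝ) ≤ (k:ℝ) := by exact_mod_cast hk
  set n : ℝ := ((d:ℝ) + 1) * d with hn
  have hnpos : 0 < n := by positivity
  set D : ℝ := ∑ v, ∑ t, (a v t) ^ 2 with hD
  set A : ℝ := 1 - ((d:ℝ) + 1) / ((d:ℝ) * k) + (1 / ((d:ℝ) * ((d:ℝ) + 1))) * D with hA
  -- each inner product is ≤ 1 and nonneg
  have hle1 : ∀ t (v' : Fin (d+1)), a v' t ≤ 1 := by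
    intro t v'
    calc a v' t ≤ ∑ i, a v' i := Finset.single_le_sum (fun i _ => hnn v' i) (mem_univ t)
    _ = 1 := hsum v'
  have hinn_nn : ∀ v v' : Fin (d+1), 0 ≤ ∑ t, a v t * a v' t := by
    intro v v'; exact Finset.sum_nonneg fun t _ => mul_nonneg (hnn v t) (hnn v' t)
  have hinn_le : ∀ v v' : Fin (d+1), ∑ t, a v t * a v' t ≤ 1 := by
    intro v v'
    calc ∑ t, a v t * a v' t ≤ ∑ t, a v t * 1 :=
          Finset.sum_le_sum fun t _ => mul_le_mul_of_nonneg_left (hle1 t v') (hnn v t)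
    _ = 1 := by simpa using hsum v
  -- positivity of each term on offDiag
  have hx_pos : ∀ p ∈ (univ : Finset (Fin (d+1))).offDiag,
      0 < 1 - ∑ t, a p.1 t * a p.2 t := by
    intro p hp
    rw [Finset.mem_offDiag] at hp
    have := hex p.1 p.2 hp.2.2
    have := hinn_le p.1 p.2
    linarith [lt_of_le_of_ne (hinn_le p.1 p.2) (hex p.1 p.2 hp.2.2)]
  -- Cauchy–Schwarz sum bound: ∑ over product = ∑_t (∑_v a v t)^2 ≥ (d+1)^2/k
  have hT : ∑ p ∈ (univ ×ˢ univ : Finset (Fin (d+1) × Fin (d+1))), ∑ t, a p.1 t * a p.2 t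
      = ∑ t, (∑ v, a v t) ^ 2 := by
    rw [Finset.sum_product]
    calc (∑ v : Fin (d+1), ∑ v' : Fin (d+1), ∑ t, a v t * a v' t)
        = ∑ v : Fin (d+1), ∑ t, ∑ v' : Fin (d+1), a v t * a v' t :=
          Finset.sum_congr rfl fun v _ => Finset.sum_comm
      _ = ∑ t, ∑ v : Fin (d+1), ∑ v' : Fin (d+1), a v t * a v' t := Finset.sum_comm
      _ = ∑ t, (∑ v, a v t) ^ 2 := by simp_rw [sq, Finset.sum_mul_sum]
  have hcs : ((d:ℝ) + 1) ^ 2 / k ≤ ∑ t, (∑ v, a v t) ^ 2 := by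
    have h1 : (∑ t, ∑ v, a v t) = (d:ℝ) + 1 := by
      rw [Finset.sum_comm]
      simp [hsum]
    have := sq_sum_le_card_mul_sum_sq (s := (univ : Finset (Fin k)))
      (f := fun t => ∑ v, a v t)
    rw [h1] at this
    simp only [Finset.card_univ, Fintype.card_fin] at this
    rw [div_le_iff₀ (by linarith)]
    linarith [this]
  -- offDiag sum of inner products
  have hsplit : ∑ p ∈ (univ ×ˢ univ : Finset (Fin (d+1) × Fin (d+1))), ∑ t, a p.1 t * a p.2 t
      = D + ∑ p ∈ (univ : Finset (Fin (d+1))).offDiag, ∑ t, a p.1 t * a p.2 t := by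
    rw [← Finset.diag_union_offDiag (univ : Finset (Fin (d+1))),
      Finset.sum_union (Finset.disjoint_diag_offDiag _), Finset.sum_diag]
    congr 1
    exact Finset.sum_congr rfl fun v _ => Finset.sum_congr rfl fun t _ => (sq (a v t)).symm ▸ (pow_two (a v t)).symm ▸ rfl
  have hS : ((d:ℝ) + 1) ^ 2 / k - D ≤
      ∑ p ∈ (univ : Finset (Fin (d+1))).offDiag, ∑ t, a p.1 t * a p.2 t := by
    have := hsplit
    rw [hT] at this
    linarith [hcs]
  -- card of offDiag
  have hcard : ((univ : Finset (Fin (d+1))).offDiag.card : ℝ) = n := by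
    rw [Finset.offDiag_card]
    simp only [Finset.card_univ, Fintype.card_fin]
    have h : (d+1)*(d+1) - (d+1) = (d+1)*d := by rw [Nat.mul_succ]; omega
    rw [h]; push_cast; ring
  -- sum of x_p ≤ n * A
  have hsum_le : ∑ p ∈ (univ : Finset (Fin (d+1))).offDiag,
      (1 - ∑ t, a p.1 t * a p.2 t) ≤ n * A := by
    rw [Finset.sum_sub_distrib, Finset.sum_const, nsmul_eq_mul, hcard]
    have hnA : n * A = n - ((d:ℝ)+1)^2/k + D := by
      rw [hA, hn]
      have hdk : (d:ℝ) * k ≠ 0 := by positivity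
      field_simp
    rw [hnA]
    linarith [hS]
  -- positivity of total, hence of A
  have hx_sum_pos : 0 < ∑ p ∈ (univ : Finset (Fin (d+1))).offDiag,
      (1 - ∑ t, a p.1 t * a p.2 t) := by
    have hne : ((univ : Finset (Fin (d+1))).offDiag).Nonempty := by
      refine ⟨(⟨0, by omega⟩, ⟨1, by omega⟩), ?_⟩
      rw [Finset.mem_offDiag]
      refine ⟨mem_univ _, mem_univ _, ?_⟩
      simp [Fin.ext_iff]
    exact Finset.sum_pos hx_pos hne
  have hApos : 0 < A := by
    nlinarith [lt_of_lt_of_le hx_sum_pos hsum_le]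
  -- tangent-line bound: log x ≤ log A + x/A - 1
  have hlog : ∑ p ∈ (univ : Finset (Fin (d+1))).offDiag,
      Real.log (1 - ∑ t, a p.1 t * a p.2 t) ≤ n * Real.log A := by
    have hstep : ∀ p ∈ (univ : Finset (Fin (d+1))).offDiag,
        Real.log (1 - ∑ t, a p.1 t * a p.2 t)
          ≤ Real.log A + (1 - ∑ t, a p.1 t * a p.2 t) / A - 1 := by
      intro p hp
      have hxp := hx_pos p hp
      have h := Real.log_le_sub_one_of_pos (x := (1 - ∑ t, a p.1 t * a p.2 t) / A)
        (by positivity)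
      rw [Real.log_div (by linarith) (by linarith)] at h
      linarith
    calc ∑ p ∈ (univ : Finset (Fin (d+1))).offDiag,
          Real.log (1 - ∑ t, a p.1 t * a p.2 t)
        ≤ ∑ p ∈ (univ : Finset (Fin (d+1))).offDiag,
          (Real.log A + (1 - ∑ t, a p.1 t * a p.2 t) / A - 1) :=
          Finset.sum_le_sum hstep
      _ = n * Real.log A
          + (∑ p ∈ (univ : Finset (Fin (d+1))).offDiag,
              (1 - ∑ t, a p.1 t * a p.2 t)) / A - n := by
          rw [Finset.sum_sub_distrib, Finset.sum_add_distrib, Finset.sum_const,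
            Finset.sum_const, nsmul_eq_mul, nsmul_eq_mul, hcard, ← Finset.sum_div]
          ring
      _ ≤ n * Real.log A := by
          have : (∑ p ∈ (univ : Finset (Fin (d+1))).offDiag,
              (1 - ∑ t, a p.1 t * a p.2 t)) / A ≤ n := by
            rw [div_le_iff₀ hApos]
            linarith [hsum_le]
          linarith
  linarith [hlog]
end

section
/- For every integer k ≥ 3, with u_k = 2·log k/(log k − log(k−1)) and ℓ_k = 2(k−1)³·log(k−1)/(k(k−2)) (and u_2 = 2·log 2/(log 2 − log 1) interpreted via u_{k−1} with k−1 ≥ 2, where u_2 = 2), one has u_{k−1} < ℓ_k < u_k. -/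
/-!
Both inequalities come from the bounds `1/y < log y - log (y - 1) < 1/(y - 1)`, which squeeze
`u_y = 2 log y / (log y - log (y - 1))` strictly between `2 (y - 1) log y` and `2 y log y`.
Hence `u_{k-1} < 2 (k - 1) log (k - 1) ≤ ℓ_k` because `k (k - 2) ≤ (k - 1)²`, and
`ℓ_k ≤ 2 (k - 1) log k < u_k` because `(k - 1)² log (k - 1) ≤ k (k - 2) log k`; the latter
reduces to `k log k ≤ (k - 1)²`, which holds from `k = 3` on since `log 3 < 4/3`.
-/

open Real

namespace RandomLift

noncomputable def u (y : ℝ) : ℝ := 2 * log y / (log y - log (y - 1))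

noncomputable def ell (x : ℝ) : ℝ := 2 * (x - 1) ^ 3 * log (x - 1) / (x * (x - 2))

lemma inv_lt_log_sub_log_sub_one {y : ℝ} (hy : 1 < y) : y⁻¹ < log y - log (y - 1) := by
  have hlt := log_lt_sub_one_of_pos (x := (y - 1) / y) (by positivity)
    (by rw [Ne, div_eq_one_iff_eq (by positivity)]; linarith)
  rw [log_div (by linarith) (by positivity)] at hlt
  have : (y - 1) / y - 1 = -y⁻¹ := by field_simp; ring
  linarith

lemma log_sub_log_sub_one_lt_inv {y : ℝ} (hy : 1 < y) : log y - log (y - 1) < (y - 1)⁻¹ := by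
  have hlt := log_lt_sub_one_of_pos (x := y / (y - 1)) (by positivity)
    (by rw [Ne, div_eq_one_iff_eq (by linarith)]; linarith)
  rw [log_div (by linarith) (by linarith)] at hlt
  have : y / (y - 1) - 1 = (y - 1)⁻¹ := by field_simp [(by linarith : y - 1 ≠ 0)]; ring
  linarith

lemma u_lt_two_mul_mul_log {y : ℝ} (hy : 1 < y) : u y < 2 * y * log y := by
  have hgap := inv_lt_log_sub_log_sub_one hy
  have hy0 : 0 < y := by linarith
  have hd : 0 < log y - log (y - 1) := (inv_pos.2 hy0).trans hgap
  have hlog : 0 < log y := log_pos hy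
  rw [u, div_lt_iff₀ hd]
  have : 1 < y * (log y - log (y - 1)) := by rwa [← inv_lt_iff_one_lt_mul₀' hy0]
  nlinarith

lemma two_mul_sub_one_mul_log_lt_u {y : ℝ} (hy : 1 < y) : 2 * (y - 1) * log y < u y := by
  have hgap := log_sub_log_sub_one_lt_inv hy
  have hy1 : 0 < y - 1 := by linarith
  have hd : 0 < log y - log (y - 1) :=
    sub_pos.2 (log_lt_log hy1 (by linarith))
  have hlog : 0 < log y := log_pos hy
  rw [u, lt_div_iff₀ hd]
  have : (y - 1) * (log y - log (y - 1)) < 1 := by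
    simpa [hy1.ne'] using mul_lt_mul_of_pos_left hgap hy1
  nlinarith

lemma two_mul_sub_one_mul_log_sub_one_le_ell {x : ℝ} (hx : 2 < x) :
    2 * (x - 1) * log (x - 1) ≤ ell x := by
  have hlog : 0 ≤ log (x - 1) := log_nonneg (by linarith)
  rw [ell, le_div_iff₀ (by nlinarith)]
  nlinarith [mul_nonneg (mul_nonneg (by linarith : (0 : ℝ) ≤ x - 1) hlog) zero_le_two]

lemma mul_log_le_sub_one_sq {x : ℝ} (hx : 3 ≤ x) : x * log x ≤ (x - 1) ^ 2 := by
  have hlog3 : log 3 < 4 / 3 := log_three_lt_d9.trans (by norm_num)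
  have htangent := log_le_sub_one_of_pos (x := x / 3) (by positivity)
  rw [log_div (by linarith) (by norm_num)] at htangent
  nlinarith

lemma sub_one_sq_mul_log_sub_one_le {x : ℝ} (hx : 3 ≤ x) :
    (x - 1) ^ 2 * log (x - 1) ≤ x * (x - 2) * log x := by
  have hx0 : 0 < x := by linarith
  have hgap := inv_lt_log_sub_log_sub_one (by linarith : 1 < x)
  have hlog : log x ≤ (x - 1) ^ 2 * x⁻¹ := by
    rw [le_mul_inv_iff₀ hx0, mul_comm]; exact mul_log_le_sub_one_sq hx
  nlinarith [mul_le_mul_of_nonneg_left hgap.le (sq_nonneg (x - 1))]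

lemma ell_le_two_mul_sub_one_mul_log {x : ℝ} (hx : 3 ≤ x) : ell x ≤ 2 * (x - 1) * log x := by
  rw [ell, div_le_iff₀ (by nlinarith)]
  nlinarith [sub_one_sq_mul_log_sub_one_le hx]

lemma u_sub_one_lt_ell {x : ℝ} (hx : 2 < x) : u (x - 1) < ell x :=
  (u_lt_two_mul_mul_log (by linarith)).trans_le (two_mul_sub_one_mul_log_sub_one_le_ell hx)

lemma ell_lt_u {x : ℝ} (hx : 3 ≤ x) : ell x < u x :=
  (ell_le_two_mul_sub_one_mul_log hx).trans_lt (two_mul_sub_one_mul_log_lt_u (by linarith))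

end RandomLift

open RandomLift in
/-- For k ≥ 3, with u_m = 2 log m/(log m − log(m−1)) and
ℓ_k = 2(k−1)³ log(k−1)/(k(k−2)), one has u_{k−1} < ℓ_k < u_k. -/
theorem stmt15 (k : ℕ) (hk : 3 ≤ k) :
    (2 * Real.log ((k : ℝ) - 1) / (Real.log ((k : ℝ) - 1) - Real.log ((k : ℝ) - 2))
        < 2 * ((k : ℝ) - 1) ^ 3 * Real.log ((k : ℝ) - 1) / ((k : ℝ) * ((k : ℝ) - 2))) ∧
    (2 * ((k : ℝ) - 1) ^ 3 * Real.log ((k : ℝ) - 1) / ((k : ℝ) * ((k : ℝ) - 2))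
        < 2 * Real.log k / (Real.log k - Real.log ((k : ℝ) - 1))) := by
  have hk' : (3 : ℝ) ≤ k := by exact_mod_cast hk
  have hlower := u_sub_one_lt_ell (by linarith : (2 : ℝ) < k)
  rw [u, sub_sub, one_add_one_eq_two] at hlower
  exact ⟨hlower, ell_lt_u hk'⟩
end

section
/- For every integer k ≥ 3, the following two inequalities hold: (i) −log(log(1/(1−1/k))) > log k − 5/(8k) > 0; (ii) log k < (k−1)·(log(log(k²)) − 5/(8k)). -/
set_option maxHeartbeats 800000

/-- Padé-type lower bound: for `0 < t < 1`, `√t - 1/√t < log t`. -/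
lemma aux_log_gt_sqrt (t : ℝ) (h0 : 0 < t) (h1 : t < 1) :
    Real.sqrt t - 1 / Real.sqrt t < Real.log t := by
  set s := Real.sqrt t with hs
  have hs0 : 0 < s := Real.sqrt_pos.mpr h0
  have hs1 : s < 1 := by
    have := Real.sqrt_lt_sqrt h0.le h1
    simpa using this
  have hlogs : Real.log s < 0 := Real.log_neg hs0 hs1
  have hkey : -Real.log s < Real.sinh (-Real.log s) :=
    Real.self_lt_sinh_iff.mpr (by linarith)
  rw [Real.sinh_neg, Real.sinh_log hs0] at hkey
  have hls : Real.log s = Real.log t / 2 := Real.log_sqrt h0.le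
  have : 1 / s = s⁻¹ := one_div s
  rw [this]
  nlinarith [hkey, hls]

/-- Padé-type upper bound: for `1 < t`, `log t < (t - 1/t)/2`. -/
lemma aux_log_lt_pade (t : ℝ) (h1 : 1 < t) :
    Real.log t < (t - 1 / t) / 2 := by
  have h0 : (0:ℝ) < t := by linarith
  have hlog : 0 < Real.log t := Real.log_pos h1
  have hkey : Real.log t < Real.sinh (Real.log t) := Real.self_lt_sinh_iff.mpr hlog
  rw [Real.sinh_log h0] at hkey
  rw [one_div]
  exact hkey

/-- Lower bound `1 - 1/x ≤ log x` for `0 < x`. -/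
lemma aux_one_sub_inv_le_log (x : ℝ) (h0 : 0 < x) : 1 - 1 / x ≤ Real.log x := by
  have := Real.log_le_sub_one_of_pos (x := x⁻¹) (by positivity)
  rw [Real.log_inv] at this
  rw [one_div]
  linarith

/-- For every integer k ≥ 3:
(i) −log(log(1/(1−1/k))) > log k − 5/(8k) > 0;
(ii) log k < (k−1)(log(log k²) − 5/(8k)). -/
theorem stmt16 (k : ℕ) (hk : 3 ≤ k) :
    (-Real.log (Real.log (1 / (1 - 1 / (k : ℝ)))) > Real.log k - 5 / (8 * k)) ∧
    (Real.log k - 5 / (8 * k) > 0) ∧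
    (Real.log k < ((k : ℝ) - 1) * (Real.log (Real.log ((k : ℝ) ^ 2)) - 5 / (8 * k))) := by
  have hK : (3:ℝ) ≤ (k:ℝ) := by exact_mod_cast hk
  have hK0 : (0:ℝ) < (k:ℝ) := by linarith
  -- log 3 bounds
  have hlog43_lt : Real.log (4/3) < 7/24 := by
    have := aux_log_lt_pade (4/3) (by norm_num)
    norm_num at this ⊢
    linarith
  have hlog43_ge : (1:ℝ)/4 ≤ Real.log (4/3) := by
    have := aux_one_sub_inv_le_log (4/3) (by norm_num)
    norm_num at this ⊢
    linarith
  have hlog3eq : Real.log 3 = 2 * Real.log 2 - Real.log (4/3) := by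
    have h4 : Real.log 4 = 2 * Real.log 2 := by
      rw [show (4:ℝ) = 2^(2:ℕ) by norm_num, Real.log_pow]; push_cast; ring
    have := Real.log_div (x := 4) (y := 4/3) (by norm_num) (by norm_num)
    norm_num at this
    linarith [this, h4]
  have hl2lo := Real.log_two_gt_d9
  have hl2hi := Real.log_two_lt_d9
  have hA : (1.0946:ℝ) < Real.log 3 := by rw [hlog3eq]; linarith
  have hB : Real.log 3 < 1.1363 := by rw [hlog3eq]; linarith
  have hlog3_le : Real.log 3 ≤ Real.log k := Real.log_le_log (by norm_num) hK
  -- Part (i).2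
  have part2 : Real.log k - 5 / (8 * k) > 0 := by
    have h58 : 5 / (8 * (k:ℝ)) ≤ 5/24 := by
      rw [div_le_div_iff₀ (by positivity) (by norm_num)]
      linarith
    linarith
  -- Part (i).1
  have part1 : -Real.log (Real.log (1 / (1 - 1 / (k : ℝ)))) >
      Real.log k - 5 / (8 * k) := by
    set t : ℝ := 1 - 1 / (k:ℝ) with htdef
    have hinvk : 1 / (k:ℝ) ≤ 1/3 := by
      rw [div_le_div_iff₀ hK0 (by norm_num)]; linarith
    have hinvk0 : 0 < 1 / (k:ℝ) := by positivity
    have ht0 : 0 < t := by rw [htdef]; linarith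
    have ht1 : t < 1 := by rw [htdef]; linarith
    have ht23 : 2/3 ≤ t := by rw [htdef]; linarith
    -- L := log (1/t) = - log t
    have hL : Real.log (1 / t) = -Real.log t := by rw [one_div, Real.log_inv]
    have hLpos : 0 < Real.log (1 / t) := by
      rw [hL]; linarith [Real.log_neg ht0 ht1]
    set s := Real.sqrt t with hsdef
    have hs0 : 0 < s := Real.sqrt_pos.mpr ht0
    have hs45 : 4/5 < s := by
      have : Real.sqrt (16/25) < Real.sqrt t := Real.sqrt_lt_sqrt (by norm_num) (by linarith)
      have h1625 : Real.sqrt (16/25) = 4/5 := by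
        rw [show (16:ℝ)/25 = (4/5)^2 by norm_num]
        exact Real.sqrt_sq (by norm_num)
      linarith [this, h1625]
    have hs1 : s < 1 := by
      have := Real.sqrt_lt_sqrt ht0.le ht1
      simpa [hsdef] using this
    -- L < (1-t)/s
    have hLub : Real.log (1 / t) < (1 - t) / s := by
      have hp := aux_log_gt_sqrt t ht0 ht1
      have hss : s * s = t := Real.mul_self_sqrt ht0.le
      rw [hL]
      have : Real.sqrt t - 1 / Real.sqrt t = -((1 - t) / s) := by
        rw [← hsdef]
        field_simp
        nlinarith [hss]
      rw [this] at hp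
      linarith
    -- (1-t)/s = (1/k)/s and bound by 5/(4k)
    have h1t : 1 - t = 1 / (k:ℝ) := by rw [htdef]; ring
    have hUb : (1 - t) / s < 5 / (4 * (k:ℝ)) := by
      rw [h1t, div_div]
      rw [div_lt_div_iff₀ (by positivity) (by positivity)]
      nlinarith
    -- log L < log((1-t)/s) = log(1/k) + L/2... 
    have hlogU : Real.log ((1 - t) / s) = -Real.log (k:ℝ) - Real.log t / 2 := by
      rw [Real.log_div (by rw [h1t]; positivity) (ne_of_gt hs0), h1t,
        one_div, Real.log_inv, hsdef, Real.log_sqrt ht0.le]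
    have hlogL : Real.log (Real.log (1 / t)) < -Real.log (k:ℝ) - Real.log t / 2 := by
      rw [← hlogU]
      exact Real.log_lt_log hLpos hLub
    -- -log t / 2 = L/2 < (1-t)/(2s) < 5/(8k)
    have hhalf : -Real.log t / 2 < 5 / (8 * (k:ℝ)) := by
      have : Real.log (1/t) < 5 / (4 * (k:ℝ)) := lt_trans hLub hUb
      rw [hL] at this
      have he : 5 / (8 * (k:ℝ)) = 5 / (4 * (k:ℝ)) / 2 := by ring
      rw [he]
      linarith
    have : Real.log (Real.log (1 / t)) < -Real.log (k:ℝ) + 5 / (8 * (k:ℝ)) := by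
      linarith
    linarith
  -- Part (ii)
  refine ⟨part1, part2, ?_⟩
  have hlogk_pos : 0 < Real.log k := by linarith
  have hlogsq : Real.log ((k:ℝ)^2) = 2 * Real.log k := by
    rw [Real.log_pow]; push_cast; ring
  -- log(log k²) ≥ log(2 * 1.0946) ≥ log 2 + log(1.0946) ≥ 0.7795
  have hmono : Real.log (2 * (1.0946:ℝ)) ≤ Real.log (Real.log ((k:ℝ)^2)) := by
    apply Real.log_le_log (by norm_num)
    rw [hlogsq]; linarith
  have hsplit : Real.log (2 * (1.0946:ℝ)) = Real.log 2 + Real.log 1.0946 :=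
    Real.log_mul (by norm_num) (by norm_num)
  have hlA : (0.0864:ℝ) ≤ Real.log 1.0946 := by
    have := aux_one_sub_inv_le_log 1.0946 (by norm_num)
    have h1 : (0.0864:ℝ) ≤ 1 - 1 / 1.0946 := by norm_num
    linarith
  have hc : (0.7795:ℝ) ≤ Real.log (Real.log ((k:ℝ)^2)) := by
    rw [hsplit] at hmono
    linarith
  -- now show log k < (k-1)(0.7795 - 5/(8k))
  have hk1 : (0:ℝ) < (k:ℝ) - 1 := by linarith
  have hmain : Real.log k < ((k:ℝ) - 1) * ((0.7795:ℝ) - 5 / (8 * k)) := by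
    rcases eq_or_lt_of_le hk with h3 | h4
    · -- k = 3
      have hk3 : (k:ℝ) = 3 := by exact_mod_cast h3.symm
      rw [hk3]
      norm_num
      linarith
    · -- k ≥ 4
      have hK4 : (4:ℝ) ≤ (k:ℝ) := by exact_mod_cast h4
      have hconc : Real.log k ≤ Real.log 3 + ((k:ℝ)/3 - 1) := by
        have hd : Real.log ((k:ℝ)/3) ≤ (k:ℝ)/3 - 1 :=
          Real.log_le_sub_one_of_pos (by positivity)
        have he : Real.log ((k:ℝ)/3) = Real.log k - Real.log 3 :=
          Real.log_div (ne_of_gt hK0) (by norm_num)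
        linarith
      have h58 : 5 / (8 * (k:ℝ)) < 5/8 := by
        rw [div_lt_div_iff₀ (by positivity) (by norm_num)]
        nlinarith
      have hexp : ((k:ℝ) - 1) * ((0.7795:ℝ) - 5 / (8 * k)) =
          0.7795 * ((k:ℝ) - 1) - ((k:ℝ) - 1) * (5 / (8*k)) := by ring
      have hbd : ((k:ℝ) - 1) * (5 / (8*k)) < 5/8 := by
        have : ((k:ℝ) - 1) * (5 / (8*k)) < (k:ℝ) * (5 / (8*k)) := by
          apply mul_lt_mul_of_pos_right (by linarith) (by positivity)
        have h2 : (k:ℝ) * (5 / (8*k)) = 5/8 := by field_simp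
        linarith
      rw [hexp]
      nlinarith
  calc Real.log k < ((k:ℝ) - 1) * ((0.7795:ℝ) - 5 / (8 * k)) := hmain
    _ ≤ ((k:ℝ) - 1) * (Real.log (Real.log ((k:ℝ)^2)) - 5 / (8 * k)) := by
        apply mul_le_mul_of_nonneg_left _ hk1.le
        linarith
end
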